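/- Every quasi-nilpotent bounded operator Q on a complex Banach space has empty pseudo upper semi B-Fredholm spectrum, empty pseudo lower semi B-Fredholm spectrum, and empty pseudo B-Fredholm spectrum. -/

import Mathlib

open Function Set

noncomputable section

namespace PseudoBF

variable {E : Type*} [NormedAddCommGroup E] [NormedSpace ℂ E]

/-- `M` is invariant under `T`. -/
def Inv (T : E →L[ℂ] E) (M : Submodule ℂ E) : Prop := ∀ x ∈ M, T x ∈ M

/-- Restriction of `T` to a `T`-invariant submodule, as a continuous linear map. -/
def restr (T : E →L[ℂ] E) {M : Submodule ℂ E} (h : Inv T M) : M →L[ℂ] M where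
  toLinearMap := (T : E →ₗ[ℂ] E).restrict h
  cont := (T.continuous.comp continuous_subtype_val).subtype_mk _

/-- Upper semi-Fredholm: finite dimensional kernel and closed range. -/
def UpperSemiFredholm (T : E →L[ℂ] E) : Prop :=
  FiniteDimensional ℂ (LinearMap.ker (T : E →ₗ[ℂ] E)) ∧ IsClosed (LinearMap.range (T : E →ₗ[ℂ] E) : Set E)

/-- Lower semi-Fredholm: range of finite codimension. -/
def LowerSemiFredholm (T : E →L[ℂ] E) : Prop :=
  FiniteDimensional ℂ (E ⧸ LinearMap.range (T : E →ₗ[ℂ] E))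

/-- Semi-Fredholm: upper or lower semi-Fredholm. -/
def SemiFredholm (T : E →L[ℂ] E) : Prop :=
  UpperSemiFredholm T ∨ LowerSemiFredholm T

/-- Quasi-nilpotent: spectral radius zero. -/
def QuasiNilpotentOp (T : E →L[ℂ] E) : Prop := spectralRadius ℂ T = 0

/-- Bounded below. -/
def BoundedBelow (T : E →L[ℂ] E) : Prop := ∃ c > 0, ∀ x, c * ‖x‖ ≤ ‖T x‖

/-- Left invertible: bounded below with complemented closed range. -/
def LeftInvertibleOp (T : E →L[ℂ] E) : Prop :=
  BoundedBelow T ∧ IsClosed (LinearMap.range (T : E →ₗ[ℂ] E) : Set E) ∧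
    ∃ P : Submodule ℂ E, IsClosed (P : Set E) ∧ IsCompl (LinearMap.range (T : E →ₗ[ℂ] E)) P

/-- Right invertible: surjective with complemented kernel. -/
def RightInvertibleOp (T : E →L[ℂ] E) : Prop :=
  Surjective T ∧ ∃ P : Submodule ℂ E, IsClosed (P : Set E) ∧ IsCompl (LinearMap.ker (T : E →ₗ[ℂ] E)) P

/-- `T` decomposes as a direct sum, along closed invariant subspaces, of an operator
satisfying `P` and a quasi-nilpotent operator. -/
def Decomp (T : E →L[ℂ] E) (P : ∀ M : Submodule ℂ E, (M →L[ℂ] M) → Prop) : Prop :=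
  ∃ (M N : Submodule ℂ E) (hM : Inv T M) (hN : Inv T N),
    IsClosed (M : Set E) ∧ IsClosed (N : Set E) ∧ IsCompl M N ∧
      P M (restr T hM) ∧ QuasiNilpotentOp (restr T hN)

def PseudoUpperSemiBFredholm (T : E →L[ℂ] E) : Prop :=
  Decomp T fun _ S => UpperSemiFredholm S

def PseudoLowerSemiBFredholm (T : E →L[ℂ] E) : Prop :=
  Decomp T fun _ S => LowerSemiFredholm S

def PseudoSemiBFredholm (T : E →L[ℂ] E) : Prop :=
  Decomp T fun _ S => SemiFredholm S

def PseudoBFredholm (T : E →L[ℂ] E) : Prop :=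
  Decomp T fun _ S => UpperSemiFredholm S ∧ LowerSemiFredholm S

def LeftGenDrazinInvertible (T : E →L[ℂ] E) : Prop :=
  Decomp T fun _ S => LeftInvertibleOp S

def RightGenDrazinInvertible (T : E →L[ℂ] E) : Prop :=
  Decomp T fun _ S => RightInvertibleOp S

def GenDrazinInvertible (T : E →L[ℂ] E) : Prop :=
  Decomp T fun _ S => IsUnit S

def sigma_pBuF (T : E →L[ℂ] E) : Set ℂ :=
  {l | ¬ PseudoUpperSemiBFredholm (T - l • 1)}

def sigma_pBlF (T : E →L[ℂ] E) : Set ℂ :=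
  {l | ¬ PseudoLowerSemiBFredholm (T - l • 1)}

def sigma_pBF (T : E →L[ℂ] E) : Set ℂ :=
  {l | ¬ PseudoBFredholm (T - l • 1)}

def sigma_lgD (T : E →L[ℂ] E) : Set ℂ :=
  {l | ¬ LeftGenDrazinInvertible (T - l • 1)}

def sigma_rgD (T : E →L[ℂ] E) : Set ℂ :=
  {l | ¬ RightGenDrazinInvertible (T - l • 1)}

def sigma_gD (T : E →L[ℂ] E) : Set ℂ :=
  {l | ¬ GenDrazinInvertible (T - l • 1)}

/-- The approximate point spectrum. -/
def sigma_ap (T : E →L[ℂ] E) : Set ℂ := {l | ¬ BoundedBelow (T - l • 1)}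

/-- The surjectivity spectrum. -/
def sigma_su (T : E →L[ℂ] E) : Set ℂ := {l | ¬ Surjective ⇑(T - l • 1)}

/-- `T` has the single valued extension property at `l0`. -/
def HasSVEPAt (T : E →L[ℂ] E) (l0 : ℂ) : Prop :=
  ∀ U : Set ℂ, IsOpen U → l0 ∈ U → ∀ f : ℂ → E, AnalyticOnNhd ℂ f U →
    (∀ z ∈ U, T (f z) = z • f z) → ∀ z ∈ U, f z = 0

/-- The set where `T` fails to have the SVEP. -/
def S_ (T : E →L[ℂ] E) : Set ℂ := {l | ¬ HasSVEPAt T l}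

/-- `l` is an accumulation point of `S`. -/
def IsAccPtOf (l : ℂ) (S : Set ℂ) : Prop :=
  ∀ ε > 0, ∃ μ ∈ S, μ ≠ l ∧ ‖μ - l‖ < ε

/-- The Banach-space adjoint of `T`, acting on the dual space. -/
def adj (T : E →L[ℂ] E) : StrongDual ℂ E →L[ℂ] StrongDual ℂ E :=
  (ContinuousLinearMap.compL ℂ E E ℂ).flip T

/-! For `λ ≠ 0` the operator `Q - λ` is invertible, so `E = E ⊕ {0}` is a decomposition with
invertible (hence Fredholm) first part; for `λ = 0` the trivial decomposition `E = {0} ⊕ E` works,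
since `Q` itself is quasi-nilpotent. Restricting to `⊤` is conjugation by `⊤ ≃L E`, which
preserves spectra. -/

lemma inv_top (T : E →L[ℂ] E) : Inv T ⊤ := fun _ _ => trivial

lemma inv_bot (T : E →L[ℂ] E) : Inv T ⊥ := by
  intro x hx
  rw [Submodule.mem_bot] at hx ⊢
  rw [hx, map_zero]

lemma quasiNilpotentOp_iff_spectrum_subset {T : E →L[ℂ] E} :
    QuasiNilpotentOp T ↔ spectrum ℂ T ⊆ {0} := by
  simp [QuasiNilpotentOp, spectralRadius, Set.subset_def]

lemma quasiNilpotentOp_of_subsingleton [Subsingleton E] (T : E →L[ℂ] E) : QuasiNilpotentOp T :=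
  quasiNilpotentOp_iff_spectrum_subset.mpr ((spectrum.of_subsingleton (R := ℂ) T).symm ▸ Set.empty_subset _)

lemma restr_top_eq_conj (T : E →L[ℂ] E) :
    restr T (inv_top T) = Submodule.topContEquiv.symm.conjContinuousAlgEquiv T := by
  ext; rfl

lemma spectrum_restr_top (T : E →L[ℂ] E) : spectrum ℂ (restr T (inv_top T)) = spectrum ℂ T := by
  rw [restr_top_eq_conj]
  exact AlgEquiv.spectrum_eq _ _

lemma isUnit_restr_top {T : E →L[ℂ] E} (hT : IsUnit T) : IsUnit (restr T (inv_top T)) := by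
  rw [restr_top_eq_conj]
  exact hT.map _

lemma QuasiNilpotentOp.restr_top {T : E →L[ℂ] E} (hT : QuasiNilpotentOp T) :
    QuasiNilpotentOp (restr T (inv_top T)) := by
  rw [quasiNilpotentOp_iff_spectrum_subset, spectrum_restr_top]
  exact quasiNilpotentOp_iff_spectrum_subset.mp hT

lemma QuasiNilpotentOp.isUnit_sub_smul_one {T : E →L[ℂ] E} (hT : QuasiNilpotentOp T) {l : ℂ}
    (hl : l ≠ 0) : IsUnit (T - l • 1) := by
  have hl' : l ∉ spectrum ℂ T := fun h => hl (quasiNilpotentOp_iff_spectrum_subset.mp hT h)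
  have hsub : T - l • 1 = -(algebraMap ℂ (E →L[ℂ] E) l - T) := by
    rw [Algebra.algebraMap_eq_smul_one, neg_sub]
  rw [hsub]
  exact (spectrum.notMem_iff.mp hl').neg

lemma UpperSemiFredholm.of_bijective {T : E →L[ℂ] E} (hT : Bijective T) : UpperSemiFredholm T := by
  have hker : LinearMap.ker (T : E →ₗ[ℂ] E) = ⊥ := LinearMap.ker_eq_bot.mpr hT.injective
  have hrange : LinearMap.range (T : E →ₗ[ℂ] E) = ⊤ := LinearMap.range_eq_top.mpr hT.surjective
  refine ⟨?_, ?_⟩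
  · rw [hker]
    infer_instance
  · rw [hrange]
    exact isClosed_univ

lemma LowerSemiFredholm.of_surjective {T : E →L[ℂ] E} (hT : Surjective T) :
    LowerSemiFredholm T := by
  have hrange : LinearMap.range (T : E →ₗ[ℂ] E) = ⊤ := LinearMap.range_eq_top.mpr hT
  unfold LowerSemiFredholm
  rw [hrange]
  infer_instance

lemma upperSemiFredholm_and_lowerSemiFredholm_of_bijective {T : E →L[ℂ] E} (hT : Bijective T) :
    UpperSemiFredholm T ∧ LowerSemiFredholm T :=
  ⟨.of_bijective hT, .of_surjective hT.surjective⟩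

lemma pseudoBFredholm_of_isUnit {T : E →L[ℂ] E} (hT : IsUnit T) : PseudoBFredholm T := by
  obtain ⟨u, hu⟩ := isUnit_restr_top hT
  refine ⟨⊤, ⊥, inv_top T, inv_bot T, by simp, by simp, isCompl_top_bot, ?_,
    quasiNilpotentOp_of_subsingleton _⟩
  rw [← hu]
  exact upperSemiFredholm_and_lowerSemiFredholm_of_bijective
    (ContinuousLinearEquiv.unitsEquiv ℂ _ u).bijective

lemma pseudoBFredholm_of_quasiNilpotentOp {T : E →L[ℂ] E} (hT : QuasiNilpotentOp T) :
    PseudoBFredholm T :=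
  ⟨⊥, ⊤, inv_bot T, inv_top T, by simp, by simp, isCompl_bot_top,
    upperSemiFredholm_and_lowerSemiFredholm_of_bijective (bijective_of_subsingleton _),
    hT.restr_top⟩

lemma Decomp.mono {T : E →L[ℂ] E} {P P' : ∀ M : Submodule ℂ E, (M →L[ℂ] M) → Prop}
    (h : ∀ M S, P M S → P' M S) : Decomp T P → Decomp T P' :=
  fun ⟨M, N, hM, hN, hMc, hNc, hMN, hP, hq⟩ => ⟨M, N, hM, hN, hMc, hNc, hMN, h M _ hP, hq⟩

lemma PseudoBFredholm.pseudoUpperSemiBFredholm {T : E →L[ℂ] E} (hT : PseudoBFredholm T) :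
    PseudoUpperSemiBFredholm T :=
  Decomp.mono (fun _ _ h => h.1) hT

lemma PseudoBFredholm.pseudoLowerSemiBFredholm {T : E →L[ℂ] E} (hT : PseudoBFredholm T) :
    PseudoLowerSemiBFredholm T :=
  Decomp.mono (fun _ _ h => h.2) hT

lemma QuasiNilpotentOp.pseudoBFredholm_sub_smul_one {Q : E →L[ℂ] E} (hQ : QuasiNilpotentOp Q)
    (l : ℂ) : PseudoBFredholm (Q - l • 1) := by
  rcases eq_or_ne l 0 with rfl | hl
  · rw [zero_smul, sub_zero]
    exact pseudoBFredholm_of_quasiNilpotentOp hQ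
  · exact pseudoBFredholm_of_isUnit (hQ.isUnit_sub_smul_one hl)

theorem stmt18_general (Q : E →L[ℂ] E) (hQ : QuasiNilpotentOp Q) :
    sigma_pBuF Q = ∅ ∧ sigma_pBlF Q = ∅ ∧ sigma_pBF Q = ∅ := by
  simp only [sigma_pBuF, sigma_pBlF, sigma_pBF, Set.eq_empty_iff_forall_notMem, Set.mem_ofPred_eq,
    not_not]
  exact ⟨fun l => (hQ.pseudoBFredholm_sub_smul_one l).pseudoUpperSemiBFredholm,
    fun l => (hQ.pseudoBFredholm_sub_smul_one l).pseudoLowerSemiBFredholm,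
    hQ.pseudoBFredholm_sub_smul_one⟩

theorem stmt18 [CompleteSpace E] (Q : E →L[ℂ] E) (hQ : QuasiNilpotentOp Q) :
    sigma_pBuF Q = ∅ ∧ sigma_pBlF Q = ∅ ∧ sigma_pBF Q = ∅ :=
  stmt18_general Q hQ

end PseudoBF
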